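/- arXiv:2510.13510 — 6 statements merged into one kernel-verified Lean document; each statement's English description precedes it below -/
import Mathlib

section
/- Let A, B be n×n Hermitian complex matrices such that A is positive semidefinite and B is definite on the kernel of A (i.e., either x*Bx > 0 for all nonzero x with Ax = 0, or x*Bx < 0 for all nonzero x with Ax = 0). Then there exist an invertible complex matrix U and real vectors α, β ∈ ℝⁿ such that U*AU = diag(α₁,…,αₙ), U*BU = diag(β₁,…,βₙ), with: αᵢ ≥ 0 for all i; (αᵢ, βᵢ) ≠ (0,0) for all i; the number of indices i with αᵢ = 0 equals the dimension of ker(A); the number of indices i with βᵢ > 0 (respectively βᵢ < 0, βᵢ = 0) equals the number of positive (respectively negative, zero) eigenvalues of B. -/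
/-!
Diagonalizing `A` by a unitary and rescaling the nonzero eigenvalues to `1` turns `A` into the
0/1 diagonal matrix `E` projecting onto the coordinates where `A` does not vanish. Split `B`
accordingly into blocks: the block `D` on the kernel coordinates is invertible, because the form
of `B` does not vanish on `ker A`. The block-unitriangular congruence that clears the off-diagonal
blocks fixes `E` and leaves the Schur complement and `D`; diagonalizing these two by unitaries
fixes `E` once more. Finally, the signs of the diagonal entries of `B` and the number of zeros on
the diagonal of `A` are read off from Sylvester's law of inertia, comparing with the
unitary diagonalizations of `B` and of `A`.
-/

open Matrix
open scoped ComplexOrder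

open Finset

namespace Matrix

variable {ι κ m k : Type*} [Fintype ι] [Fintype κ] [Fintype m] [Fintype k]

lemma star_dotProduct_conjTranspose_mul_mul_mulVec {R : Type*} [CommSemiring R] [StarRing R]
    (M : Matrix ι ι R) (C : Matrix ι κ R) (x : κ → R) :
    star x ⬝ᵥ (Cᴴ * M * C) *ᵥ x = star (C *ᵥ x) ⬝ᵥ M *ᵥ (C *ᵥ x) := by
  rw [star_mulVec, ← dotProduct_mulVec, mulVec_mulVec, mulVec_mulVec]

lemma re_star_dotProduct_diagonal_mulVec [DecidableEq ι] (d : ι → ℝ) (x : ι → ℂ) :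
    (star x ⬝ᵥ diagonal (fun i => (d i : ℂ)) *ᵥ x).re =
      ∑ i, d i * Complex.normSq (x i) := by
  simp only [dotProduct, mulVec_diagonal, Complex.re_sum, Pi.star_apply, Complex.star_def,
    Complex.mul_re, Complex.mul_im, Complex.conj_re, Complex.conj_im, Complex.ofReal_re,
    Complex.ofReal_im, Complex.normSq_apply]
  exact sum_congr rfl fun i _ => by ring

section Sylvester

variable [DecidableEq ι] {a b : ι → ℝ} {M : Matrix ι ι ℂ}

/- Sylvester's law of inertia. Otherwise a dimension count gives a nonzero vector supported on
`{0 < a}` whose image under `M` vanishes on `{0 < b}`; it is positive for the form `a` but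
nonpositive for the form `b`. -/
lemma card_pos_le_of_diagonal_eq
    (h : diagonal (fun i => (a i : ℂ)) = Mᴴ * diagonal (fun i => (b i : ℂ)) * M) :
    #{i | 0 < a i} ≤ #{i | 0 < b i} := by
  by_contra! hlt
  let f : ({i // 0 < a i} → ℂ) →ₗ[ℂ] ({i // 0 < b i} → ℂ) :=
    LinearMap.funLeft ℂ ℂ Subtype.val ∘ₗ M.mulVecLin ∘ₗ
      Function.ExtendByZero.linearMap ℂ Subtype.val
  have hker : LinearMap.ker f ≠ ⊥ :=
    LinearMap.ker_ne_bot_of_finrank_lt (by simpa [Fintype.card_subtype] using hlt)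
  obtain ⟨y, hy, hy0⟩ := Submodule.exists_mem_ne_zero_of_ne_bot hker
  set x : ι → ℂ := Function.extend Subtype.val y 0
  have hx_pos (i : {i // 0 < a i}) : x i = y i := Subtype.val_injective.extend_apply _ _ _
  have hx_zero (i : ι) (hi : ¬ 0 < a i) : x i = 0 :=
    Function.extend_apply' _ _ _ fun ⟨j, hj⟩ => hi (hj ▸ j.2)
  have hMx (i : {i // 0 < b i}) : (M *ᵥ x) i = 0 := congrFun hy i
  have hform := congrArg (fun N => (star x ⬝ᵥ N *ᵥ x).re) h
  simp only [star_dotProduct_conjTranspose_mul_mul_mulVec, re_star_dotProduct_diagonal_mulVec]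
    at hform
  obtain ⟨j, hj⟩ := Function.ne_iff.1 hy0
  have hlhs : 0 < ∑ i, a i * Complex.normSq (x i) := by
    refine sum_pos' (fun i _ => ?_) ⟨j, mem_univ _, ?_⟩
    · by_cases hi : 0 < a i
      · exact mul_nonneg hi.le (Complex.normSq_nonneg _)
      · simp [hx_zero i hi]
    · rw [hx_pos]
      exact mul_pos j.2 (Complex.normSq_pos.2 hj)
  have hrhs : ∑ i, b i * Complex.normSq ((M *ᵥ x) i) ≤ 0 := by
    refine sum_nonpos fun i _ => ?_
    by_cases hi : 0 < b i
    · simp [hMx ⟨i, hi⟩]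
    · exact mul_nonpos_of_nonpos_of_nonneg (not_lt.1 hi) (Complex.normSq_nonneg _)
  linarith

lemma card_pos_eq_of_diagonal_eq (hM : IsUnit M)
    (h : diagonal (fun i => (a i : ℂ)) = Mᴴ * diagonal (fun i => (b i : ℂ)) * M) :
    #{i | 0 < a i} = #{i | 0 < b i} := by
  have hdet : IsUnit M.det := (isUnit_iff_isUnit_det M).1 hM
  have hdet' : IsUnit Mᴴ.det := by simpa [det_conjTranspose] using hdet
  refine (card_pos_le_of_diagonal_eq h).antisymm (card_pos_le_of_diagonal_eq (M := M⁻¹) ?_)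
  rw [h, conjTranspose_nonsing_inv, Matrix.mul_assoc, mul_nonsing_inv_cancel_right _ _ hdet,
    ← Matrix.mul_assoc, nonsing_inv_mul _ hdet', Matrix.one_mul]

lemma card_neg_eq_of_diagonal_eq (hM : IsUnit M)
    (h : diagonal (fun i => (a i : ℂ)) = Mᴴ * diagonal (fun i => (b i : ℂ)) * M) :
    #{i | a i < 0} = #{i | b i < 0} := by
  have hneg (d : ι → ℝ) :
      diagonal (fun i => ((-d i : ℝ) : ℂ)) = -diagonal (fun i => (d i : ℂ)) := by
    rw [diagonal_neg]
    congr 1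
    ext i
    simp
  have h' : diagonal (fun i => ((-a i : ℝ) : ℂ)) =
      Mᴴ * diagonal (fun i => ((-b i : ℝ) : ℂ)) * M := by
    rw [hneg, hneg, h, Matrix.mul_neg, Matrix.neg_mul]
  simpa only [neg_pos] using card_pos_eq_of_diagonal_eq hM h'

omit [DecidableEq ι] in
lemma card_eq_zero_add_card_pos_add_card_neg (a : ι → ℝ) :
    #{i | a i = 0} + #{i | 0 < a i} + #{i | a i < 0} = Fintype.card ι := by
  rw [card_filter, card_filter, card_filter, ← sum_add_distrib, ← sum_add_distrib,
    ← card_univ, card_eq_sum_ones]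
  refine sum_congr rfl fun i _ => ?_
  rcases lt_trichotomy (a i) 0 with hi | hi | hi
  · simp [hi, hi.ne, hi.not_gt]
  · simp [hi]
  · simp [hi, hi.ne', hi.not_gt]

lemma card_eq_zero_eq_of_diagonal_eq (hM : IsUnit M)
    (h : diagonal (fun i => (a i : ℂ)) = Mᴴ * diagonal (fun i => (b i : ℂ)) * M) :
    #{i | a i = 0} = #{i | b i = 0} := by
  have ha := card_eq_zero_add_card_pos_add_card_neg a
  have hb := card_eq_zero_add_card_pos_add_card_neg b
  rw [card_pos_eq_of_diagonal_eq hM h, card_neg_eq_of_diagonal_eq hM h] at ha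
  omega

end Sylvester

section Spectral

variable [DecidableEq m]

lemma IsHermitian.conjTranspose_eigenvectorUnitary_mul_mul {S : Matrix m m ℂ}
    (hS : S.IsHermitian) :
    (hS.eigenvectorUnitary : Matrix m m ℂ)ᴴ * S * hS.eigenvectorUnitary =
      diagonal (fun i => (hS.eigenvalues i : ℂ)) := by
  simpa [Unitary.conjStarAlgAut_star_apply, star_eq_conjTranspose, Function.comp_def]
    using hS.conjStarAlgAut_star_eigenvectorUnitary

lemma IsHermitian.exists_diagonal_eq_conj_diagonal_eigenvalues {B U : Matrix m m ℂ}
    (hB : B.IsHermitian) (hU : IsUnit U) {β : m → ℝ}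
    (h : Uᴴ * B * U = diagonal (fun i => (β i : ℂ))) :
    ∃ M : Matrix m m ℂ, IsUnit M ∧
      diagonal (fun i => (β i : ℂ)) =
        Mᴴ * diagonal (fun i => (hB.eigenvalues i : ℂ)) * M := by
  set V := (hB.eigenvectorUnitary : Matrix m m ℂ)
  have hB' : B = V * diagonal (fun i => (hB.eigenvalues i : ℂ)) * Vᴴ := by
    conv_lhs => rw [hB.spectral_theorem, Unitary.conjStarAlgAut_apply]
    simp [V, star_eq_conjTranspose, Function.comp_def]
  refine ⟨Vᴴ * U, Unitary.isUnit_coe.star.mul hU, ?_⟩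
  conv_lhs => rw [← h, hB']
  simp only [conjTranspose_mul, conjTranspose_conjTranspose, Matrix.mul_assoc]

lemma IsHermitian.finrank_ker_mulVecLin {A : Matrix m m ℂ} (hA : A.IsHermitian) :
    Module.finrank ℂ (LinearMap.ker A.mulVecLin) = #{i | hA.eigenvalues i = 0} := by
  have hrank := hA.rank_eq_card_non_zero_eigs
  have hnull := LinearMap.finrank_range_add_finrank_ker A.mulVecLin
  have hsplit := card_filter_add_card_filter_not (s := univ) (fun i => hA.eigenvalues i = 0)
  rw [rank, Fintype.card_subtype] at hrank
  simp only [ne_eq] at hrank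
  simp only [Module.finrank_fintype_fun_eq_card, card_univ] at hnull hsplit
  omega

lemma IsHermitian.eigenvalues_ne_zero_of_isUnit {D : Matrix m m ℂ} (hD : D.IsHermitian)
    (hDu : IsUnit D) (j : m) : hD.eigenvalues j ≠ 0 := by
  have hdet := (isUnit_iff_isUnit_det D).1 hDu
  rw [hD.det_eq_prod_eigenvalues, isUnit_iff_ne_zero, prod_ne_zero_iff] at hdet
  exact Complex.ofReal_ne_zero.1 (hdet j (mem_univ j))

end Spectral

def IsCongrDiag [DecidableEq ι] (U A B : Matrix ι ι ℂ) (α β : ι → ℝ) : Prop :=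
  IsUnit U ∧ Uᴴ * A * U = diagonal (fun i => (α i : ℂ)) ∧
    Uᴴ * B * U = diagonal (fun i => (β i : ℂ))

def IsAnisotropicOnKer (A B : Matrix ι ι ℂ) : Prop :=
  ∀ x : ι → ℂ, x ≠ 0 → A *ᵥ x = 0 → star x ⬝ᵥ B *ᵥ x ≠ 0

lemma conjTranspose_submatrix_mul_mul_submatrix (e : κ ≃ ι) (M : Matrix ι ι ℂ)
    (G : Matrix κ κ ℂ) :
    (G.submatrix e.symm e.symm)ᴴ * M * G.submatrix e.symm e.symm =
      (Gᴴ * M.submatrix e e * G).submatrix e.symm e.symm := by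
  have hM : M = (M.submatrix e e).submatrix e.symm e.symm := by simp [submatrix_submatrix]
  conv_lhs => rw [hM]
  rw [conjTranspose_submatrix, submatrix_mul_equiv, submatrix_mul_equiv]

lemma IsCongrDiag.conj [DecidableEq ι] {W G A B : Matrix ι ι ℂ} {α β : ι → ℝ}
    (hW : IsUnit W) (h : IsCongrDiag G (Wᴴ * A * W) (Wᴴ * B * W) α β) :
    IsCongrDiag (W * G) A B α β := by
  obtain ⟨hG, hA, hB⟩ := h
  refine ⟨hW.mul hG, ?_, ?_⟩
  · rw [← hA, conjTranspose_mul]; simp only [Matrix.mul_assoc]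
  · rw [← hB, conjTranspose_mul]; simp only [Matrix.mul_assoc]

lemma IsCongrDiag.of_submatrix [DecidableEq ι] [DecidableEq κ] {A B : Matrix ι ι ℂ}
    (e : κ ≃ ι) {G : Matrix κ κ ℂ} {α β : κ → ℝ}
    (h : IsCongrDiag G (A.submatrix e e) (B.submatrix e e) α β) :
    IsCongrDiag (G.submatrix e.symm e.symm) A B (α ∘ e.symm) (β ∘ e.symm) := by
  obtain ⟨hG, hA, hB⟩ := h
  refine ⟨?_, ?_, ?_⟩
  · rw [isUnit_iff_isUnit_det, det_submatrix_equiv_self]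
    exact (isUnit_iff_isUnit_det G).1 hG
  · rw [conjTranspose_submatrix_mul_mul_submatrix, hA, submatrix_diagonal_equiv]; rfl
  · rw [conjTranspose_submatrix_mul_mul_submatrix, hB, submatrix_diagonal_equiv]; rfl

lemma IsAnisotropicOnKer.conj [DecidableEq ι] {A B W : Matrix ι ι ℂ} (hW : IsUnit W)
    (h : IsAnisotropicOnKer A B) : IsAnisotropicOnKer (Wᴴ * A * W) (Wᴴ * B * W) := by
  intro x hx hAx
  have hWx : W *ᵥ x ≠ 0 := fun h0 =>
    hx (mulVec_injective_of_isUnit hW (by rw [h0, mulVec_zero]))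
  have hAWx : A *ᵥ (W *ᵥ x) = 0 := by
    refine mulVec_injective_of_isUnit ((isUnit_conjTranspose _).2 hW) ?_
    rw [mulVec_mulVec, mulVec_mulVec, hAx, mulVec_zero]
  rw [star_dotProduct_conjTranspose_mul_mul_mulVec]
  exact h _ hWx hAWx

lemma IsAnisotropicOnKer.submatrix {A B : Matrix ι ι ℂ} (e : κ ≃ ι)
    (h : IsAnisotropicOnKer A B) : IsAnisotropicOnKer (A.submatrix e e) (B.submatrix e e) := by
  intro x hx hAx
  have hx' : x ∘ e.symm ≠ 0 := fun h0 => hx (by ext i; simpa using congrFun h0 (e i))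
  rw [submatrix_mulVec_equiv] at hAx ⊢
  have hAx' : A *ᵥ (x ∘ e.symm) = 0 := by ext i; simpa using congrFun hAx (e.symm i)
  rw [← comp_equiv_symm_dotProduct]
  exact h _ hx' hAx'

lemma IsAnisotropicOnKer.isUnit_fromBlocks₂₂ [DecidableEq k] {P A : Matrix m m ℂ}
    {C : Matrix m k ℂ} {C' : Matrix k m ℂ} {D : Matrix k k ℂ}
    (h : IsAnisotropicOnKer (fromBlocks P 0 0 0) (fromBlocks A C C' D)) : IsUnit D := by
  rw [isUnit_iff_isUnit_det, isUnit_iff_ne_zero]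
  intro hdet
  obtain ⟨y, hy, hDy⟩ := exists_mulVec_eq_zero_iff.2 hdet
  refine h (Sum.elim 0 y) (fun h0 => hy (by ext j; simpa using congrFun h0 (Sum.inr j)))
    (by simp [fromBlocks_mulVec]) ?_
  simp [fromBlocks_mulVec, hDy, Function.star_sumElim]

section Blocks

variable [DecidableEq m] [DecidableEq k]

lemma conjTranspose_fromBlocks_one_zero_mul_mul (P : Matrix m m ℂ) (X : Matrix k m ℂ) :
    (fromBlocks 1 0 X 1)ᴴ * fromBlocks P 0 0 (0 : Matrix k k ℂ) * fromBlocks 1 0 X 1 =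
      fromBlocks P 0 0 0 := by
  simp [fromBlocks_conjTranspose, fromBlocks_multiply]

lemma conjTranspose_fromBlocks_mul_mul_eq_schur (A : Matrix m m ℂ) (C : Matrix m k ℂ)
    {D : Matrix k k ℂ} (hD : D.IsHermitian) (hDu : IsUnit D) :
    (fromBlocks 1 0 (-(D⁻¹ * Cᴴ)) 1)ᴴ * fromBlocks A C Cᴴ D *
        fromBlocks 1 0 (-(D⁻¹ * Cᴴ)) 1 =
      fromBlocks (A - C * D⁻¹ * Cᴴ) 0 0 D := by
  have hdet : IsUnit D.det := (isUnit_iff_isUnit_det D).1 hDu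
  simp [fromBlocks_conjTranspose, fromBlocks_multiply, conjTranspose_nonsing_inv, hD.eq,
    Matrix.mul_assoc, mul_nonsing_inv_cancel_left _ _ hdet, nonsing_inv_mul _ hdet,
    sub_eq_add_neg]

omit [Fintype m] [Fintype k] in
lemma fromBlocks_one_zero_eq_diagonal :
    (fromBlocks 1 0 0 0 : Matrix (m ⊕ k) (m ⊕ k) ℂ) =
      diagonal (fun i => ((Sum.elim (1 : m → ℝ) 0 i : ℝ) : ℂ)) := by
  rw [← diagonal_one, ← diagonal_zero, fromBlocks_diagonal]
  congr 1
  ext (i | i) <;> simp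

lemma exists_isCongrDiag_fromBlocks_zero {S : Matrix m m ℂ} {K : Matrix k k ℂ}
    (hS : S.IsHermitian) (hK : K.IsHermitian) :
    ∃ G : Matrix (m ⊕ k) (m ⊕ k) ℂ, IsCongrDiag G (fromBlocks 1 0 0 0) (fromBlocks S 0 0 K)
      (Sum.elim 1 0) (Sum.elim hS.eigenvalues hK.eigenvalues) := by
  set US := (hS.eigenvectorUnitary : Matrix m m ℂ)
  set UK := (hK.eigenvectorUnitary : Matrix k k ℂ)
  refine ⟨fromBlocks US 0 0 UK, ?_, ?_, ?_⟩
  · rw [isUnit_iff_isUnit_det, det_fromBlocks_zero₁₂]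
    exact ((isUnit_iff_isUnit_det _).1 Unitary.isUnit_coe).mul
      ((isUnit_iff_isUnit_det _).1 Unitary.isUnit_coe)
  · have hUS : USᴴ * US = 1 := by simp [US, ← star_eq_conjTranspose]
    rw [← fromBlocks_one_zero_eq_diagonal]
    simp [fromBlocks_conjTranspose, fromBlocks_multiply, hUS]
  · simp only [fromBlocks_conjTranspose, fromBlocks_multiply, conjTranspose_zero,
      Matrix.mul_zero, Matrix.zero_mul, add_zero, zero_add, US, UK,
      hS.conjTranspose_eigenvectorUnitary_mul_mul, hK.conjTranspose_eigenvectorUnitary_mul_mul,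
      fromBlocks_diagonal]
    congr 1
    ext (i | i) <;> rfl

lemma exists_isCongrDiag_fromBlocks {A : Matrix m m ℂ} {C : Matrix m k ℂ} {D : Matrix k k ℂ}
    (hA : A.IsHermitian) (hD : D.IsHermitian)
    (h : IsAnisotropicOnKer (fromBlocks 1 0 0 0) (fromBlocks A C Cᴴ D)) :
    ∃ (G : Matrix (m ⊕ k) (m ⊕ k) ℂ) (β : m ⊕ k → ℝ),
      IsCongrDiag G (fromBlocks 1 0 0 0) (fromBlocks A C Cᴴ D) (Sum.elim 1 0) β ∧
        ∀ j, β (Sum.inr j) ≠ 0 := by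
  have hDu : IsUnit D := h.isUnit_fromBlocks₂₂
  have hS : (A - C * D⁻¹ * Cᴴ).IsHermitian :=
    (IsHermitian.fromBlocks₂₂ A C hD).1 (hA.fromBlocks rfl hD)
  set T : Matrix (m ⊕ k) (m ⊕ k) ℂ := fromBlocks 1 0 (-(D⁻¹ * Cᴴ)) 1
  have hT : IsUnit T := by
    rw [isUnit_iff_isUnit_det, det_fromBlocks_zero₁₂]
    simp
  obtain ⟨G, hG⟩ := exists_isCongrDiag_fromBlocks_zero hS hD
  refine ⟨T * G, Sum.elim hS.eigenvalues hD.eigenvalues, IsCongrDiag.conj hT ?_,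
    hD.eigenvalues_ne_zero_of_isUnit hDu⟩
  rwa [conjTranspose_fromBlocks_one_zero_mul_mul,
    conjTranspose_fromBlocks_mul_mul_eq_schur A C hD hDu]

end Blocks

section Construction

variable [DecidableEq ι]

lemma exists_isCongrDiag_indicator (p : ι → Prop) [DecidablePred p] {B : Matrix ι ι ℂ}
    (hB : B.IsHermitian) (h : IsAnisotropicOnKer (diagonal fun i => if p i then 1 else 0) B) :
    ∃ (G : Matrix ι ι ℂ) (β : ι → ℝ),
      IsCongrDiag G (diagonal fun i => if p i then 1 else 0) B
        (fun i => if p i then 1 else 0) β ∧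
        ∀ i, ¬ p i → β i ≠ 0 := by
  set e := Equiv.sumCompl p
  have hE :
      (diagonal fun i => if p i then (1 : ℂ) else 0).submatrix e e = fromBlocks 1 0 0 0 := by
    rw [submatrix_diagonal_equiv, fromBlocks_one_zero_eq_diagonal]
    congr 1
    ext (i | i) <;> simp [e, i.2]
  have hBe := hB.submatrix e
  rw [← fromBlocks_toBlocks (B.submatrix e e)] at hBe
  obtain ⟨h11, h12, -, h22⟩ := isHermitian_fromBlocks_iff.1 hBe
  have hB' : B.submatrix e e =
      fromBlocks (B.submatrix e e).toBlocks₁₁ (B.submatrix e e).toBlocks₁₂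
        (B.submatrix e e).toBlocks₁₂ᴴ (B.submatrix e e).toBlocks₂₂ := by
    rw [h12, fromBlocks_toBlocks]
  have he := h.submatrix e
  rw [hE, hB'] at he
  obtain ⟨G, β, hG, hβ⟩ := exists_isCongrDiag_fromBlocks h11 h22 he
  rw [← hE, ← hB'] at hG
  refine ⟨G.submatrix e.symm e.symm, β ∘ e.symm, ?_, fun i hi => ?_⟩
  · convert IsCongrDiag.of_submatrix e hG using 1
    ext i
    by_cases hi : p i <;> simp [e, hi, Equiv.sumCompl_symm_apply_of_pos,
      Equiv.sumCompl_symm_apply_of_neg]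
  · simpa [e, Equiv.sumCompl_symm_apply_of_neg hi] using hβ ⟨i, hi⟩

lemma PosSemidef.exists_isUnit_conj_eq_diagonal {A : Matrix ι ι ℂ} (hA : A.PosSemidef) :
    ∃ W : Matrix ι ι ℂ, IsUnit W ∧
      Wᴴ * A * W = diagonal fun i => if hA.1.eigenvalues i ≠ 0 then 1 else 0 := by
  set μ := hA.1.eigenvalues
  have hμ (i : ι) : 0 ≤ μ i := hA.eigenvalues_nonneg i
  set s : ι → ℝ := fun i => if μ i = 0 then 1 else (√(μ i))⁻¹
  have hs (i : ι) : s i ≠ 0 := by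
    by_cases hi : μ i = 0
    · simp [s, hi]
    · simpa [s, hi] using (Real.sqrt_pos.2 ((hμ i).lt_of_ne' hi)).ne'
  have hsμs (i : ι) : (s i : ℂ) * μ i * s i = if μ i ≠ 0 then 1 else 0 := by
    by_cases hi : μ i = 0
    · simp [s, hi]
    · have hsqrt : √(μ i) ≠ 0 := (Real.sqrt_pos.2 ((hμ i).lt_of_ne' hi)).ne'
      have hsμs : s i * μ i * s i = 1 := by
        simp only [s, hi, if_false]
        field_simp
        exact (Real.sq_sqrt (hμ i)).symm
      simpa [hi] using congrArg Complex.ofReal hsμs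
  set V := (hA.1.eigenvectorUnitary : Matrix ι ι ℂ)
  set Ds := diagonal fun i => (s i : ℂ)
  have hDs : IsUnit Ds :=
    isUnit_diagonal.2 (Pi.isUnit_iff.2 fun i => (Complex.ofReal_ne_zero.2 (hs i)).isUnit)
  refine ⟨V * Ds, Unitary.isUnit_coe.mul hDs, ?_⟩
  calc (V * Ds)ᴴ * A * (V * Ds) = Dsᴴ * (Vᴴ * A * V) * Ds := by
        simp only [conjTranspose_mul, Matrix.mul_assoc]
    _ = _ := by
        rw [hA.1.conjTranspose_eigenvectorUnitary_mul_mul, diagonal_conjTranspose,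
          diagonal_mul_diagonal, diagonal_mul_diagonal]
        congr 1
        ext i
        simp only [Pi.star_apply, Complex.star_def, Complex.conj_ofReal]
        exact hsμs i

theorem PosSemidef.exists_isCongrDiag {A B : Matrix ι ι ℂ} (hA : A.PosSemidef)
    (hB : B.IsHermitian) (h : IsAnisotropicOnKer A B) :
    ∃ (U : Matrix ι ι ℂ) (α β : ι → ℝ),
      IsCongrDiag U A B α β ∧ (∀ i, 0 ≤ α i) ∧ ∀ i, α i = 0 → β i ≠ 0 := by
  obtain ⟨W, hW, hWA⟩ := hA.exists_isUnit_conj_eq_diagonal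
  have hWAB := h.conj hW
  rw [hWA] at hWAB
  obtain ⟨G, β, hG, hβ⟩ :=
    exists_isCongrDiag_indicator _ (isHermitian_conjTranspose_mul_mul W hB) hWAB
  rw [← hWA] at hG
  refine ⟨W * G, _, β, hG.conj hW, fun i => by split_ifs <;> norm_num, fun i hi => hβ i ?_⟩
  simpa using hi

end Construction

end Matrix

/-- Paper Theorem 4.8: for a Hermitian pair (A, B) with A positive semidefinite and
B definite on the kernel of A, there is a simultaneous diagonalization by congruence
with real diagonal entries whose signs encode the inertia of B and the kernel of A. -/
theorem spectrum_of_semidefinite_pair {n : ℕ} (A B : Matrix (Fin n) (Fin n) ℂ)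
    (hA : A.PosSemidef) (hB : B.IsHermitian)
    (hdef : (∀ x : Fin n → ℂ, x ≠ 0 → A.mulVec x = 0 → 0 < (star x ⬝ᵥ B.mulVec x).re) ∨
            (∀ x : Fin n → ℂ, x ≠ 0 → A.mulVec x = 0 → (star x ⬝ᵥ B.mulVec x).re < 0)) :
    ∃ (U : Matrix (Fin n) (Fin n) ℂ) (α β : Fin n → ℝ),
      IsUnit U ∧
      Uᴴ * A * U = Matrix.diagonal (fun i => (α i : ℂ)) ∧
      Uᴴ * B * U = Matrix.diagonal (fun i => (β i : ℂ)) ∧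
      (∀ i, 0 ≤ α i) ∧
      (∀ i, (α i, β i) ≠ (0, 0)) ∧
      (Finset.univ.filter (fun i => α i = 0)).card =
        Module.finrank ℂ (LinearMap.ker A.mulVecLin) ∧
      (Finset.univ.filter (fun i => 0 < β i)).card =
        (Finset.univ.filter (fun i => 0 < hB.eigenvalues i)).card ∧
      (Finset.univ.filter (fun i => β i < 0)).card =
        (Finset.univ.filter (fun i => hB.eigenvalues i < 0)).card ∧
      (Finset.univ.filter (fun i => β i = 0)).card =
        (Finset.univ.filter (fun i => hB.eigenvalues i = 0)).card := by
  have hAB : IsAnisotropicOnKer A B := fun x hx hAx hBx => by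
    rcases hdef with h | h <;> simpa [hBx] using h x hx hAx
  obtain ⟨U, α, β, ⟨hU, hUA, hUB⟩, hα, hαβ⟩ := hA.exists_isCongrDiag hB hAB
  obtain ⟨MA, hMA, hαA⟩ := hA.1.exists_diagonal_eq_conj_diagonal_eigenvalues hU hUA
  obtain ⟨MB, hMB, hβB⟩ := hB.exists_diagonal_eq_conj_diagonal_eigenvalues hU hUB
  refine ⟨U, α, β, hU, hUA, hUB, hα, fun i hi => hαβ i (congrArg Prod.fst hi)
    (congrArg Prod.snd hi), ?_, card_pos_eq_of_diagonal_eq hMB hβB,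
    card_neg_eq_of_diagonal_eq hMB hβB, card_eq_zero_eq_of_diagonal_eq hMB hβB⟩
  rw [hA.1.finrank_ker_mulVecLin]
  exact card_eq_zero_eq_of_diagonal_eq hMA hαA
end

section
/- Let A, B be n×n Hermitian complex matrices with A positive semidefinite, and suppose B is definite on the kernel of A (i.e., either x*Bx > 0 for all nonzero x with Ax = 0, or x*Bx < 0 for all nonzero x with Ax = 0). Then (A,B) is a definite pair: there exists c > 0 such that for every x ∈ ℂⁿ with ‖x‖ = 1, (Re(x*Ax))² + (Re(x*Bx))² ≥ c. -/
/-!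
The function `x ↦ (Re x*Ax)² + (Re x*Bx)²` is continuous, so by compactness of the unit sphere
it suffices that it does not vanish there. Since `A ≥ 0`, `Re x*Ax = 0` forces `Ax = 0`, and then
`Re x*Bx ≠ 0` by definiteness of `B` on the kernel of `A`.
-/

open Matrix
open scoped ComplexOrder

namespace Matrix.PosSemidef

variable {ι 𝕜 : Type*} [Fintype ι] [RCLike 𝕜] {A : Matrix ι ι 𝕜}

theorem mulVec_eq_zero_of_re_dotProduct_mulVec_eq_zero (hA : A.PosSemidef) {x : ι → 𝕜}
    (h : RCLike.re (star x ⬝ᵥ A *ᵥ x) = 0) : A *ᵥ x = 0 := by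
  have him := (RCLike.nonneg_iff.mp (hA.dotProduct_mulVec_nonneg x)).2
  exact (hA.dotProduct_mulVec_zero_iff x).mp (RCLike.ext (by simp [h]) (by simp [him]))

theorem sq_re_add_sq_re_pos {B : Matrix ι ι 𝕜} (hA : A.PosSemidef)
    (hB : ∀ x : ι → 𝕜, x ≠ 0 → A *ᵥ x = 0 → RCLike.re (star x ⬝ᵥ B *ᵥ x) ≠ 0)
    {x : ι → 𝕜} (hx : x ≠ 0) :
    0 < RCLike.re (star x ⬝ᵥ A *ᵥ x) ^ 2 + RCLike.re (star x ⬝ᵥ B *ᵥ x) ^ 2 := by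
  rcases eq_or_ne (RCLike.re (star x ⬝ᵥ A *ᵥ x)) 0 with hAx | hAx
  · have hBx := hB x hx (hA.mulVec_eq_zero_of_re_dotProduct_mulVec_eq_zero hAx)
    rw [hAx]
    positivity
  · positivity

end Matrix.PosSemidef

theorem semidefinite_plus_kernel_definite_is_definite_pair_general {n : ℕ}
    (A B : Matrix (Fin n) (Fin n) ℂ)
    (hA : A.PosSemidef)
    (hdef : (∀ x : Fin n → ℂ, x ≠ 0 → A.mulVec x = 0 → 0 < (star x ⬝ᵥ B.mulVec x).re) ∨
            (∀ x : Fin n → ℂ, x ≠ 0 → A.mulVec x = 0 → (star x ⬝ᵥ B.mulVec x).re < 0)) :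
    ∃ c > (0 : ℝ), ∀ x : EuclideanSpace ℂ (Fin n), ‖x‖ = 1 →
      c ≤ (star (x : Fin n → ℂ) ⬝ᵥ A.mulVec (x : Fin n → ℂ)).re ^ 2 +
          (star (x : Fin n → ℂ) ⬝ᵥ B.mulVec (x : Fin n → ℂ)).re ^ 2 := by
  have hB : ∀ x : Fin n → ℂ, x ≠ 0 → A *ᵥ x = 0 → (star x ⬝ᵥ B *ᵥ x).re ≠ 0 := by
    rcases hdef with hpos | hneg <;> intro x hx hAx
    · exact (hpos x hx hAx).ne'
    · exact (hneg x hx hAx).ne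
  obtain ⟨c, hc, hle⟩ := (isCompact_sphere (0 : EuclideanSpace ℂ (Fin n)) 1).exists_forall_le'
    (by fun_prop) fun x hx ↦ hA.sq_re_add_sq_re_pos hB
      (mt (WithLp.ofLp_eq_zero 2).mp (ne_zero_of_mem_sphere one_ne_zero ⟨x, hx⟩))
  exact ⟨c, hc, fun x hx ↦ hle x (by simpa using hx)⟩

/-- First step in the proof of the paper's Theorem 4.8: if A is positive semidefinite
and B is definite on the kernel of A, then (A, B) is a definite pair. -/
theorem semidefinite_plus_kernel_definite_is_definite_pair {n : ℕ}
    (A B : Matrix (Fin n) (Fin n) ℂ)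
    (hA : A.PosSemidef) (hB : B.IsHermitian)
    (hdef : (∀ x : Fin n → ℂ, x ≠ 0 → A.mulVec x = 0 → 0 < (star x ⬝ᵥ B.mulVec x).re) ∨
            (∀ x : Fin n → ℂ, x ≠ 0 → A.mulVec x = 0 → (star x ⬝ᵥ B.mulVec x).re < 0)) :
    ∃ c > (0 : ℝ), ∀ x : EuclideanSpace ℂ (Fin n), ‖x‖ = 1 →
      c ≤ (star (x : Fin n → ℂ) ⬝ᵥ A.mulVec (x : Fin n → ℂ)).re ^ 2 +
          (star (x : Fin n → ℂ) ⬝ᵥ B.mulVec (x : Fin n → ℂ)).re ^ 2 :=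
  semidefinite_plus_kernel_definite_is_definite_pair_general A B hA hdef
end

section
/- Let A be a real n×n matrix and b ∈ ℝⁿ such that aᵢⱼ ≥ 0 and aᵢᵢ > 0 for all i,j, and bᵢ > 0 for all i (a positive system). If moreover bᵢ > Σ_{j≠i} (aᵢⱼ/aⱼⱼ) bⱼ for every i = 1,…,n, then A is invertible and the unique solution x of Ax = b satisfies 0 < xᵢ ≤ bᵢ/aᵢᵢ for every i. -/
/-!
Rescale the unknowns by the positive weights `wⱼ = bⱼ / aⱼⱼ`: the matrix `B = A · diag w` has
nonnegative entries, diagonal `b`, and the hypothesis says exactly that `B` is strictly diagonally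
dominant by rows, so `B`, hence `A`, is invertible (Lévy–Desplanques). A solution `x` of `Ax = b`
gives `y = x / w` with `By = diag B`. Comparing the rows of `By = diag B` at a minimal and at a
maximal entry of `y` shows that the minimum cannot be `≤ 0`; once `y > 0`, each row gives `yᵢ ≤ 1`.
-/

open Matrix Finset

namespace Matrix

variable {ι : Type*} [Fintype ι] [DecidableEq ι]

theorem mulVec_apply_eq_diag_add_sum_erase {α : Type*} [NonUnitalNonAssocSemiring α]
    (B : Matrix ι ι α) (y : ι → α) (i : ι) :
    (B *ᵥ y) i = B i i * y i + ∑ j ∈ univ.erase i, B i j * y j :=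
  (add_sum_erase _ (fun j => B i j * y j) (mem_univ i)).symm

theorem mul_diagonal_mulVec_div {K : Type*} [Field K] (A : Matrix ι ι K) {w : ι → K}
    (hw : ∀ j, w j ≠ 0) (x : ι → K) : (A * diagonal w) *ᵥ (x / w) = A *ᵥ x := by
  rw [← mulVec_mulVec]
  congr
  ext j
  rw [mulVec_diagonal, Pi.div_apply, mul_div_cancel₀ _ (hw j)]

section RowDominant

variable {B : Matrix ι ι ℝ} (hB : ∀ i j, 0 ≤ B i j)
  (hdom : ∀ i, ∑ j ∈ univ.erase i, B i j < B i i) {y : ι → ℝ} (hy : B *ᵥ y = fun i => B i i)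
include hB hdom hy

theorem pos_of_mulVec_eq_diag (i : ι) : 0 < y i := by
  have : Nonempty ι := ⟨i⟩
  obtain ⟨k, hk⟩ := Finite.exists_min y
  obtain ⟨m, hm⟩ := Finite.exists_max y
  refine lt_of_lt_of_le ?_ (hk i)
  by_contra! hk_nonpos
  have row (i : ι) : B i i * y i + ∑ j ∈ univ.erase i, B i j * y j = B i i := by
    rw [← mulVec_apply_eq_diag_add_sum_erase, hy]
  have off_nonneg (i : ι) : 0 ≤ ∑ j ∈ univ.erase i, B i j := sum_nonneg fun j _ => hB i j
  have upper : ∑ j ∈ univ.erase k, B k j * y j ≤ (∑ j ∈ univ.erase k, B k j) * y m := by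
    rw [sum_mul]
    exact sum_le_sum fun j _ => mul_le_mul_of_nonneg_left (hm j) (hB k j)
  have lower : (∑ j ∈ univ.erase m, B m j) * y k ≤ ∑ j ∈ univ.erase m, B m j * y j := by
    rw [sum_mul]
    exact sum_le_sum fun j _ => mul_le_mul_of_nonneg_left (hk j) (hB m j)
  have hk_gt : 1 - y k < y m := by
    have hkk : B k k * (1 - y k) ≤ (∑ j ∈ univ.erase k, B k j) * y m := by linarith [row k]
    have hkk_pos : 0 < B k k := (off_nonneg k).trans_lt (hdom k)
    have hm_pos : 0 < y m := by
      by_contra! hm_nonpos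
      nlinarith [mul_nonpos_of_nonneg_of_nonpos (off_nonneg k) hm_nonpos]
    have := mul_lt_mul_of_pos_right (hdom k) hm_pos
    exact lt_of_mul_lt_mul_left (by linarith) hkk_pos.le
  have hm_le : y m ≤ 1 - y k := by
    have hmm : (∑ j ∈ univ.erase m, B m j) * y k ≤ B m m * (1 - y m) := by linarith [row m]
    have := mul_le_mul_of_nonpos_right (hdom m).le hk_nonpos
    have hmm_pos : 0 < B m m := (off_nonneg m).trans_lt (hdom m)
    nlinarith
  linarith

theorem le_one_of_mulVec_eq_diag (i : ι) : y i ≤ 1 := by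
  have h := mulVec_apply_eq_diag_add_sum_erase B y i
  rw [hy] at h
  have off_nonneg : 0 ≤ ∑ j ∈ univ.erase i, B i j * y j :=
    sum_nonneg fun j _ => mul_nonneg (hB i j) (pos_of_mulVec_eq_diag hB hdom hy j).le
  have diag_pos : 0 < B i i := (sum_nonneg fun j _ => hB i j).trans_lt (hdom i)
  nlinarith

end RowDominant

theorem isUnit_of_sum_row_lt_diag_of_nonneg {B : Matrix ι ι ℝ} (hB : ∀ i j, 0 ≤ B i j)
    (hdom : ∀ i, ∑ j ∈ univ.erase i, B i j < B i i) : IsUnit B := by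
  rw [isUnit_iff_isUnit_det, isUnit_iff_ne_zero]
  refine det_ne_zero_of_sum_row_lt_diag fun k => ?_
  simpa only [Real.norm_of_nonneg (hB _ _)] using hdom k

end Matrix

/-- Paper Lemma 4.11 (positive_solution): a positive linear system whose right-hand side
strictly dominates the weighted off-diagonal contributions has an invertible matrix and a
positive solution bounded above componentwise by `bᵢ / aᵢᵢ`. -/
theorem positive_system_positive_solution {n : ℕ}
    (A : Matrix (Fin n) (Fin n) ℝ) (b : Fin n → ℝ)
    (hA_nonneg : ∀ i j, 0 ≤ A i j) (hA_diag : ∀ i, 0 < A i i)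
    (hb : ∀ i, 0 < b i)
    (hcond : ∀ i, ∑ j ∈ Finset.univ.erase i, (A i j / A j j) * b j < b i) :
    IsUnit A ∧ ∀ x : Fin n → ℝ, A.mulVec x = b →
      ∀ i, 0 < x i ∧ x i ≤ b i / A i i := by
  set w : Fin n → ℝ := fun j => b j / A j j
  have hw (j : Fin n) : 0 < w j := div_pos (hb j) (hA_diag j)
  set B := A * diagonal w
  have hB_apply (i j : Fin n) : B i j = A i j / A j j * b j := by
    simp only [B, w, mul_diagonal]
    ring
  have hB_diag (i : Fin n) : B i i = b i := by
    rw [hB_apply, div_self (hA_diag i).ne', one_mul]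
  have hB_nonneg (i j : Fin n) : 0 ≤ B i j := by
    rw [hB_apply]
    exact mul_nonneg (div_nonneg (hA_nonneg i j) (hA_diag j).le) (hb j).le
  have hB_dom (i : Fin n) : ∑ j ∈ univ.erase i, B i j < B i i := by
    rw [hB_diag, sum_congr rfl fun j _ => hB_apply i j]
    exact hcond i
  refine ⟨?_, fun x hx i => ?_⟩
  · exact isUnit_of_mul_isUnit_left (isUnit_of_sum_row_lt_diag_of_nonneg hB_nonneg hB_dom)
  have hy : B *ᵥ (x / w) = fun i => B i i := by
    rw [mul_diagonal_mulVec_div A (fun j => (hw j).ne'), hx]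
    exact funext fun i => (hB_diag i).symm
  rw [← mul_div_cancel₀ (x i) (hw i).ne']
  exact ⟨mul_pos (hw i) (pos_of_mulVec_eq_diag hB_nonneg hB_dom hy i),
    mul_le_of_le_one_right (hw i).le (le_one_of_mulVec_eq_diag hB_nonneg hB_dom hy i)⟩
end

section
/- Let (Ω, μ) be a finite measure space, B₁,…,Bₙ : Ω → ℝ integrable functions with pairwise products integrable and Σₖ Bₖ(x) = 1 for all x ∈ Ω, and x₁,…,xₙ ∈ Ω points such that the collocation matrix A (Aᵢⱼ = Bⱼ(xᵢ)) is invertible. Let C = A⁻¹, bᵢ = ∫_Ω Bᵢ dμ, let w ∈ ℝⁿ solve Aᵀw = b, and define the consistent mass M with Mᵢⱼ = ∫_Ω BᵢBⱼ dμ and the quadrature mass M̂ with M̂ᵢⱼ = Σₖ wₖ Bᵢ(xₖ)Bⱼ(xₖ). Then the row-sum lumping of CᵀMC equals CᵀM̂C; i.e., the diagonal matrix whose i-th entry is Σⱼ (CᵀMC)ᵢⱼ coincides with CᵀM̂C. -/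
open Matrix MeasureTheory

/-- Paper Corollary 4.4 (LMB_QMB): applying the interpolatory quadrature rule to the mass
matrix in the original basis and then changing basis equals changing basis first and then
row-sum lumping: `lump(CᵀMC) = CᵀM̂C`. -/
theorem rowsum_lumping_commutes_with_quadrature
    {Ω : Type*} [MeasurableSpace Ω] (μ : Measure Ω) [IsFiniteMeasure μ] {n : ℕ}
    (B : Fin n → Ω → ℝ) (x : Fin n → Ω)
    (hInt : ∀ i, Integrable (B i) μ)
    (hInt2 : ∀ i j, Integrable (fun ω => B i ω * B j ω) μ)
    (hpou : ∀ ω, ∑ k, B k ω = 1)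
    (A : Matrix (Fin n) (Fin n) ℝ) (hA : ∀ i j, A i j = B j (x i))
    (hAinv : IsUnit A)
    (C : Matrix (Fin n) (Fin n) ℝ) (hC : C = A⁻¹)
    (b w : Fin n → ℝ) (hb : ∀ i, b i = ∫ ω, B i ω ∂μ)
    (hw : Aᵀ.mulVec w = b)
    (M Mhat : Matrix (Fin n) (Fin n) ℝ)
    (hM : ∀ i j, M i j = ∫ ω, B i ω * B j ω ∂μ)
    (hMhat : ∀ i j, Mhat i j = ∑ k, w k * B i (x k) * B j (x k)) :
    Matrix.diagonal (fun i => ∑ j, (Cᵀ * M * C) i j) = Cᵀ * Mhat * C := by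
  have hdet : IsUnit A.det := (Matrix.isUnit_iff_isUnit_det A).mp hAinv
  have hCA : C * A = 1 := by rw [hC]; exact Matrix.nonsing_inv_mul A hdet
  have hAC : A * C = 1 := by rw [hC]; exact Matrix.mul_nonsing_inv A hdet
  have hCtAt : Cᵀ * Aᵀ = 1 := by
    rw [← Matrix.transpose_mul, hAC, Matrix.transpose_one]
  -- Mhat = Aᵀ * diagonal w * A
  have hMhat' : Mhat = Aᵀ * Matrix.diagonal w * A := by
    ext i j
    rw [hMhat]
    simp only [Matrix.mul_apply, Matrix.diagonal_apply, Matrix.transpose_apply,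
      ite_mul, zero_mul, mul_ite, mul_zero, Finset.sum_ite_eq, Finset.sum_ite_eq', Finset.mem_univ, if_true]
    apply Finset.sum_congr rfl
    intro k _
    rw [hA, hA]; ring
  -- RHS = diagonal w
  have hRHS : Cᵀ * Mhat * C = Matrix.diagonal w := by
    rw [hMhat', ← Matrix.mul_assoc, ← Matrix.mul_assoc, hCtAt, Matrix.one_mul,
      Matrix.mul_assoc, hAC, Matrix.mul_one]
  -- vectors of ones
  have hA1 : A.mulVec (fun _ => 1) = fun _ => 1 := by
    funext i
    simp only [Matrix.mulVec, dotProduct, mul_one]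
    calc ∑ j, A i j = ∑ j, B j (x i) := by simp [hA]
      _ = 1 := hpou (x i)
  have hC1 : C.mulVec (fun _ => 1) = fun _ => 1 := by
    conv_lhs => rw [← hA1, Matrix.mulVec_mulVec, hCA]
    simp [Matrix.one_mulVec]
  have hM1 : M.mulVec (fun _ => 1) = b := by
    funext i
    simp only [Matrix.mulVec, dotProduct, mul_one]
    calc ∑ j, M i j = ∑ j, ∫ ω, B i ω * B j ω ∂μ := by simp [hM]
      _ = ∫ ω, ∑ j, B i ω * B j ω ∂μ := (integral_finset_sum _ (fun j _ => hInt2 i j)).symm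
      _ = ∫ ω, B i ω ∂μ := by
          apply integral_congr_ae
          filter_upwards with ω
          rw [← Finset.mul_sum, hpou, mul_one]
      _ = b i := (hb i).symm
  have hCM : Cᵀ.mulVec b = w := by
    rw [← hw, Matrix.mulVec_mulVec, ← Matrix.transpose_mul, hAC, Matrix.transpose_one,
      Matrix.one_mulVec]
  have hLHS : ∀ i, ∑ j, (Cᵀ * M * C) i j = w i := by
    intro i
    have : ∑ j, (Cᵀ * M * C) i j = (Cᵀ * M * C).mulVec (fun _ => 1) i := by
      simp [Matrix.mulVec, dotProduct]
    rw [this, ← Matrix.mulVec_mulVec, ← Matrix.mulVec_mulVec, hC1, hM1, hCM]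
  rw [hRHS]
  exact congrArg Matrix.diagonal (funext hLHS)
end

section
/- Let q ≥ 1, and let x₀,…,x_q be distinct real numbers with x₀ = −1 and x_q = 1. Suppose the weights w₀,…,w_q ∈ ℝ satisfy the exactness condition Σₖ wₖ P(xₖ) = ∫_{−1}^{1} P(t) dt for every real polynomial P of degree at most 2q − 1. Let φ₀,…,φ_q be the Lagrange interpolation polynomials at the nodes x₀,…,x_q, let M be the (q+1)×(q+1) matrix with Mᵢⱼ = ∫_{−1}^{1} φᵢ(t)φⱼ(t) dt, and let M̂ = diag(w₀,…,w_q). Then M̂ − M is positive semidefinite. -/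
/-!
For `v` with Lagrange interpolant `p` (degree `≤ q`), `vᵀ (M̂ - M) v = Σ wₖ p(xₖ)² - ∫ p²` is the
quadrature error of `p²`. The rule is exact below degree `2q`, so the error of a polynomial of
degree `≤ 2q` is its coefficient of `t^(2q)` times the error of any monic polynomial `B` of degree
`2q`. For `p²` that coefficient is a square, and `B = (t + 1)(t - 1) π(t)²`, with `π` the nodal
polynomial of the interior nodes, vanishes at every node and is `≤ 0` on `[-1, 1]`, so its error
`-∫ B` is nonnegative.
-/

open Matrix Polynomial

section MassMatrix

variable {ι : Type*}

noncomputable def massMatrix (φ : ι → ℝ → ℝ) (a b : ℝ) : Matrix ι ι ℝ :=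
  Matrix.of fun i j => ∫ t in a..b, φ i t * φ j t

theorem massMatrix_isHermitian (φ : ι → ℝ → ℝ) (a b : ℝ) : (massMatrix φ a b).IsHermitian :=
  Matrix.ext fun i j => by
    simp only [conjTranspose_apply, massMatrix, of_apply, star_trivial, mul_comm]

theorem dotProduct_mulVec_massMatrix [Fintype ι] {φ : ι → ℝ → ℝ} (hφ : ∀ i, Continuous (φ i))
    (a b : ℝ) (v : ι → ℝ) :
    v ⬝ᵥ (massMatrix φ a b *ᵥ v) = ∫ t in a..b, (∑ i, v i * φ i t) ^ 2 := by
  have hcont : ∀ i j, Continuous fun t => v i * φ i t * (v j * φ j t) := fun i j =>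
    (continuous_const.mul (hφ i)).mul (continuous_const.mul (hφ j))
  simp_rw [sq, Finset.sum_mul_sum]
  rw [intervalIntegral.integral_finsetSum fun i _ =>
    (continuous_finsetSum _ fun j _ => hcont i j).intervalIntegrable a b]
  refine Finset.sum_congr rfl fun i _ => ?_
  rw [intervalIntegral.integral_finsetSum fun j _ => (hcont i j).intervalIntegrable a b,
    mulVec, dotProduct, Finset.mul_sum]
  refine Finset.sum_congr rfl fun j _ => ?_
  rw [massMatrix, of_apply, ← intervalIntegral.integral_mul_const,
    ← intervalIntegral.integral_const_mul]
  exact intervalIntegral.integral_congr fun t _ => by ring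

end MassMatrix

theorem Lagrange.sum_mul_eval_basis {F ι : Type*} [Field F] [DecidableEq ι] (s : Finset ι)
    (x v : ι → F) (t : F) :
    ∑ i ∈ s, v i * (Lagrange.basis s x i).eval t = (Lagrange.interpolate s x v).eval t := by
  simp [Lagrange.interpolate_apply, eval_finsetSum]

theorem Lagrange.natDegree_interpolate_lt {F ι : Type*} [Field F] [DecidableEq ι]
    {s : Finset ι} (hs : s.Nonempty) {x : ι → F} (hx : Set.InjOn x s) (r : ι → F) :
    (Lagrange.interpolate s x r).natDegree < s.card := by
  obtain h | h := eq_or_ne (Lagrange.interpolate s x r) 0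
  · rw [h, natDegree_zero]; exact hs.card_pos
  · exact (natDegree_lt_iff_degree_lt h).2 (Lagrange.degree_interpolate_lt r hx)

theorem quadrature_sub_integral_eq_coeff_mul {ι : Type*} [Fintype ι] {x w : ι → ℝ} {a b : ℝ}
    {n : ℕ} (hexact : ∀ P : ℝ[X], P.degree ≤ n →
      ∑ k, w k * P.eval (x k) = ∫ t in a..b, P.eval t)
    {B : ℝ[X]} (hB : B.Monic) (hBdeg : B.natDegree = n + 1) {P : ℝ[X]}
    (hP : P.natDegree ≤ n + 1) :
    ∑ k, w k * P.eval (x k) - ∫ t in a..b, P.eval t =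
      P.coeff (n + 1) * (∑ k, w k * B.eval (x k) - ∫ t in a..b, B.eval t) := by
  set c := P.coeff (n + 1)
  have hdeg : (P - C c * B).degree ≤ n := by
    rw [degree_le_iff_coeff_zero]
    intro m hm
    obtain rfl | hlt : n + 1 = m ∨ n + 1 < m := by norm_cast at hm; omega
    · rw [coeff_sub, coeff_C_mul, ← hBdeg, hB.coeff_natDegree, hBdeg, mul_one, sub_self]
    · rw [coeff_sub, coeff_C_mul, coeff_eq_zero_of_natDegree_lt (hP.trans_lt hlt),
        coeff_eq_zero_of_natDegree_lt (hBdeg.trans_lt hlt), mul_zero, sub_zero]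
  have h := hexact _ hdeg
  simp only [eval_sub, eval_mul, eval_C, mul_sub, Finset.sum_sub_distrib] at h
  rw [intervalIntegral.integral_sub (f := fun t => P.eval t) (g := fun t => c * B.eval t)
    (P.continuous.intervalIntegrable a b)
    ((continuous_const.mul B.continuous).intervalIntegrable a b),
    intervalIntegral.integral_const_mul] at h
  have hsum : ∑ k, w k * (c * B.eval (x k)) = c * ∑ k, w k * B.eval (x k) := by
    rw [Finset.mul_sum]; exact Finset.sum_congr rfl fun k _ => by ring
  rw [hsum] at h
  linear_combination h

section Lobatto

variable {F : Type*} [Field F]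

noncomputable def lobattoNodal {q : ℕ} (x : Fin (q + 1) → F) : F[X] :=
  (X - C (x 0)) * (X - C (x (Fin.last q))) * Lagrange.nodal (Finset.Ioo 0 (Fin.last q)) x ^ 2

variable {q : ℕ} (x : Fin (q + 1) → F)

theorem eval_lobattoNodal_node (k : Fin (q + 1)) : (lobattoNodal x).eval (x k) = 0 := by
  by_cases hk : k ∈ Finset.Ioo 0 (Fin.last q)
  · simp [lobattoNodal, Lagrange.eval_nodal_at_node hk]
  · obtain rfl | rfl : k = 0 ∨ k = Fin.last q := by
      simp only [Finset.mem_Ioo, not_and_or, not_lt, Fin.le_def, Fin.ext_iff, Fin.val_last,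
        Fin.val_zero] at hk ⊢
      omega
    · simp [lobattoNodal]
    · simp [lobattoNodal]

theorem lobattoNodal_monic : (lobattoNodal x).Monic :=
  ((monic_X_sub_C _).mul (monic_X_sub_C _)).mul (Lagrange.nodal_monic.pow 2)

theorem natDegree_lobattoNodal (hq : 1 ≤ q) : (lobattoNodal x).natDegree = 2 * q := by
  rw [lobattoNodal, ((monic_X_sub_C _).mul (monic_X_sub_C _)).natDegree_mul
    (Lagrange.nodal_monic.pow 2), (monic_X_sub_C _).natDegree_mul (monic_X_sub_C _),
    natDegree_pow, Lagrange.natDegree_nodal, Fin.card_Ioo]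
  simp only [natDegree_X_sub_C, Fin.val_last, Fin.val_zero]
  omega

theorem eval_lobattoNodal_nonpos [LinearOrder F] [IsStrictOrderedRing F] {t : F}
    (ht : t ∈ Set.Icc (x 0) (x (Fin.last q))) : (lobattoNodal x).eval t ≤ 0 := by
  simp only [lobattoNodal, eval_mul, eval_sub, eval_X, eval_C, eval_pow]
  exact mul_nonpos_of_nonpos_of_nonneg
    (mul_nonpos_of_nonneg_of_nonpos (sub_nonneg.2 ht.1) (sub_nonpos.2 ht.2)) (sq_nonneg _)

end Lobatto

/-- One-dimensional core of the paper's Lemma 3.1 (spectral_fem): for a quadrature rule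
with q+1 distinct nodes including the endpoints ±1 that is exact on polynomials of degree
≤ 2q−1 (the Gauss–Lobatto rule), the diagonal matrix of weights dominates the consistent
mass matrix of the Lagrange basis in the Loewner order. -/
theorem gauss_lobatto_lumped_mass_dominates {q : ℕ} (hq : 1 ≤ q)
    (x : Fin (q + 1) → ℝ) (hinj : Function.Injective x)
    (hx0 : x 0 = -1) (hxq : x (Fin.last q) = 1)
    (w : Fin (q + 1) → ℝ)
    (hexact : ∀ P : Polynomial ℝ, P.degree ≤ (2 * q - 1 : ℕ) →
      ∑ k, w k * P.eval (x k) = ∫ t in (-1 : ℝ)..1, P.eval t)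
    (M : Matrix (Fin (q + 1)) (Fin (q + 1)) ℝ)
    (hM : ∀ i j, M i j = ∫ t in (-1 : ℝ)..1,
      (Lagrange.basis Finset.univ x i).eval t * (Lagrange.basis Finset.univ x j).eval t) :
    (Matrix.diagonal w - M).PosSemidef := by
  classical
  obtain rfl : M = massMatrix (fun i t => (Lagrange.basis Finset.univ x i).eval t) (-1) 1 :=
    Matrix.ext hM
  refine posSemidef_iff_dotProduct_mulVec.2
    ⟨(isHermitian_diagonal w).sub (massMatrix_isHermitian _ _ _), fun v => ?_⟩
  set p := Lagrange.interpolate Finset.univ x v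
  have hp : p.natDegree ≤ q := by
    have := Lagrange.natDegree_interpolate_lt Finset.univ_nonempty hinj.injOn v
    rwa [Finset.card_univ, Fintype.card_fin, Nat.lt_succ_iff] at this
  have hp_nodes (k : Fin (q + 1)) : p.eval (x k) = v k :=
    Lagrange.eval_interpolate_at_node v hinj.injOn (Finset.mem_univ k)
  have h2q : 2 * q - 1 + 1 = 2 * q := by omega
  have herror := quadrature_sub_integral_eq_coeff_mul hexact (lobattoNodal_monic x)
    (h2q ▸ natDegree_lobattoNodal x hq) (P := p ^ 2) (h2q ▸ natDegree_pow_le_of_le 2 hp)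
  have hcoeff : (p ^ 2).coeff (2 * q) = p.coeff q ^ 2 := by
    rw [sq, sq, two_mul]; exact coeff_mul_add_eq_of_natDegree_le hp hp
  have hB : ∫ t in (-1 : ℝ)..1, (lobattoNodal x).eval t ≤ 0 := by
    simpa using intervalIntegral.integral_mono_on (by norm_num)
      ((lobattoNodal x).continuous.intervalIntegrable _ _)
      (continuous_const.intervalIntegrable _ _) fun t ht =>
        eval_lobattoNodal_nonpos x (by rwa [hx0, hxq])
  calc 0 ≤ p.coeff q ^ 2 * (0 - ∫ t in (-1 : ℝ)..1, (lobattoNodal x).eval t) :=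
        mul_nonneg (sq_nonneg _) (by linarith)
    _ = ∑ k, w k * (p ^ 2).eval (x k) - ∫ t in (-1 : ℝ)..1, (p ^ 2).eval t := by
        rw [herror, h2q, hcoeff]; simp [eval_lobattoNodal_node]
    _ = star v ⬝ᵥ ((diagonal w - massMatrix _ (-1) 1) *ᵥ v) := by
        rw [sub_mulVec, dotProduct_sub, star_trivial,
          dotProduct_mulVec_massMatrix fun i => (Lagrange.basis _ x i).continuous]
        simp only [Lagrange.sum_mul_eval_basis, dotProduct, mulVec_diagonal, eval_pow, hp_nodes]
        congr 1
        exact Finset.sum_congr rfl fun k _ => by ring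
end

section
/- Let q ≥ 1, let x₀,…,x_q be distinct real numbers, and let w₀,…,w_q ∈ ℝ satisfy Σₖ wₖ P(xₖ) = ∫_{−1}^{1} P(t) dt for every real polynomial P of degree at most 2q − 1. Let φ₀,…,φ_q be the Lagrange interpolation polynomials at the nodes, M the matrix with Mᵢⱼ = ∫_{−1}^{1} φᵢ(t)φⱼ(t) dt, and M̂ = diag(w₀,…,w_q). Then M̂ − M is a symmetric matrix of rank at most 1: there exist c ∈ ℝ and v ∈ ℝ^{q+1} such that M̂ − M = c·vvᵀ. -/
open Matrix Polynomial

/-- Teukolsky's observation underlying the appendix proof of the paper's Lemma 3.1: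
the consistent and lumped (quadrature-diagonal) mass matrices of the Lagrange basis at
q+1 distinct nodes, for a rule exact on polynomials of degree ≤ 2q−1, differ by a
symmetric rank-one update. -/
theorem lumped_minus_consistent_mass_rank_one {q : ℕ} (hq : 1 ≤ q)
    (x : Fin (q + 1) → ℝ) (hinj : Function.Injective x)
    (w : Fin (q + 1) → ℝ)
    (hexact : ∀ P : Polynomial ℝ, P.degree ≤ (2 * q - 1 : ℕ) →
      ∑ k, w k * P.eval (x k) = ∫ t in (-1 : ℝ)..1, P.eval t)
    (M : Matrix (Fin (q + 1)) (Fin (q + 1)) ℝ)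
    (hM : ∀ i j, M i j = ∫ t in (-1 : ℝ)..1,
      (Lagrange.basis Finset.univ x i).eval t * (Lagrange.basis Finset.univ x j).eval t) :
    ∃ (c : ℝ) (v : Fin (q + 1) → ℝ),
      Matrix.diagonal w - M = c • Matrix.vecMulVec v v := by
  have hinjOn : Set.InjOn x (Finset.univ : Finset (Fin (q + 1))) := hinj.injOn
  set φ : Fin (q + 1) → ℝ[X] := fun i => Lagrange.basis Finset.univ x i with hφ
  have hdeg : ∀ i, (φ i).natDegree = q := by
    intro i
    simp [hφ, Lagrange.natDegree_basis hinjOn (Finset.mem_univ i)]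
  have hne : ∀ i, φ i ≠ 0 := fun i =>
    Lagrange.basis_ne_zero hinjOn (Finset.mem_univ i)
  refine ⟨(∑ k, w k * (x k) ^ (2 * q)) - ∫ t in (-1 : ℝ)..1, t ^ (2 * q),
    fun i => (φ i).leadingCoeff, ?_⟩
  ext i j
  have hP : ((φ i) * (φ j)).natDegree = 2 * q := by
    rw [Polynomial.natDegree_mul (hne i) (hne j), hdeg, hdeg]; ring
  set P := (φ i) * (φ j) with hPdef
  set R := P.eraseLead with hR
  have hRdeg : R.degree ≤ ((2 * q - 1 : ℕ) : WithBot ℕ) := by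
    refine Polynomial.degree_le_of_natDegree_le ?_
    calc R.natDegree ≤ P.natDegree - 1 := Polynomial.eraseLead_natDegree_le P
      _ = 2 * q - 1 := by rw [hP]
  have hsplit : P = R + Polynomial.C P.leadingCoeff * Polynomial.X ^ (2 * q) := by
    rw [hR, ← hP]; exact (Polynomial.eraseLead_add_C_mul_X_pow P).symm
  have hlead : P.leadingCoeff = (φ i).leadingCoeff * (φ j).leadingCoeff :=
    Polynomial.leadingCoeff_mul _ _
  have hRexact := hexact R hRdeg
  -- compute the quadrature sum of P
  have hsum : ∑ k, w k * P.eval (x k) = Matrix.diagonal w i j := by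
    have : ∀ k, P.eval (x k) = (if i = k then 1 else 0) * (if j = k then 1 else 0) := by
      intro k
      rw [hPdef, Polynomial.eval_mul]
      congr 1
      · rcases eq_or_ne i k with h | h
        · simp [hφ, h, Lagrange.eval_basis_self hinjOn (Finset.mem_univ k)]
        · simp [hφ, h, Lagrange.eval_basis_of_ne h (Finset.mem_univ k)]
      · rcases eq_or_ne j k with h | h
        · simp [hφ, h, Lagrange.eval_basis_self hinjOn (Finset.mem_univ k)]
        · simp [hφ, h, Lagrange.eval_basis_of_ne h (Finset.mem_univ k)]
    simp_rw [this]
    rcases eq_or_ne i j with h | h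
    · subst h
      simp [Matrix.diagonal]
    · rw [Finset.sum_eq_zero, Matrix.diagonal_apply_ne _ h]
      intro k _
      rcases eq_or_ne i k with h1 | h1
      · subst h1; simp [Ne.symm h]
      · simp [h1]
  -- the integral of P
  have hint : (∫ t in (-1 : ℝ)..1, P.eval t) = M i j := by
    rw [hM i j]
    congr 1 with t
    rw [hPdef, Polynomial.eval_mul]
  -- split both sum and integral using hsplit
  have heval : ∀ t : ℝ, P.eval t = R.eval t + P.leadingCoeff * t ^ (2 * q) := by
    intro t
    conv_lhs => rw [hsplit]
    simp
  have hsum2 : ∑ k, w k * P.eval (x k)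
      = (∑ k, w k * R.eval (x k)) + P.leadingCoeff * ∑ k, w k * (x k) ^ (2 * q) := by
    simp_rw [heval]
    rw [Finset.mul_sum, ← Finset.sum_add_distrib]
    congr 1 with k
    ring
  have hintR : IntervalIntegrable (fun t => R.eval t) MeasureTheory.volume (-1 : ℝ) 1 :=
    (Polynomial.continuous R).intervalIntegrable _ _
  have hintX : IntervalIntegrable (fun t : ℝ => P.leadingCoeff * t ^ (2 * q))
      MeasureTheory.volume (-1 : ℝ) 1 :=
    ((continuous_const.mul (continuous_pow _))).intervalIntegrable _ _
  have hint2 : (∫ t in (-1 : ℝ)..1, P.eval t)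
      = (∫ t in (-1 : ℝ)..1, R.eval t)
        + P.leadingCoeff * ∫ t in (-1 : ℝ)..1, t ^ (2 * q) := by
    have : (fun t : ℝ => P.eval t)
        = fun t => R.eval t + P.leadingCoeff * t ^ (2 * q) := funext heval
    rw [this, intervalIntegral.integral_add hintR hintX,
      intervalIntegral.integral_const_mul]
  have key : Matrix.diagonal w i j - M i j
      = P.leadingCoeff * ((∑ k, w k * (x k) ^ (2 * q)) - ∫ t in (-1 : ℝ)..1, t ^ (2 * q)) := by
    rw [← hsum, ← hint, hsum2, hint2, hRexact]
    ring
  simp only [Matrix.sub_apply, Matrix.smul_apply, Matrix.vecMulVec_apply, smul_eq_mul]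
  rw [key, hlead]
  ring
end
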